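/- Let Z = X + Y where X ~ B(n_X, ζ) and Y ~ B(n_Y, 1 − ζ) are independent binomials with n_X + n_Y = n, n ≥ 1, and 0 < ζ ≤ 1/2. Then for every i, Pr[Z = i] ≤ C/(ζ√n) for an absolute constant C (e.g., C = (e√2/(2π))·(1 + 2/(ζn)) works). -/

import Mathlib

/-!
Whichever of `nX`, `nY` is larger is at least `n / 2`, so it suffices to bound the point
probabilities of `B(m, ζ)` for `n ≤ 2m` (those of `B(m, 1 - ζ)` are its mirror image): the other
factor of the convolution sums to at most `1`. A point probability of `B(m, ζ)` is at most the
one at the mode `k₀ = ⌊(m + 1) ζ⌋`, and the two-sided Stirling bounds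
`√(2πj) (j/e)^j ≤ j! ≤ e √j (j/e)^j` together with `(mζ)^k (m(1-ζ))^l ≤ k^k l^l` bound that by
`e √m / (2π √(k₀ l))`, `l = m - k₀`. Since `k₀ ≥ ζm + ζ - 1` and `l ≥ ζm - ζ`, this is at most
`e/(2π) (1 + 1/(ζm)) / (ζ √m)`.
-/

open Real Finset
open scoped Nat

noncomputable def binomProb (n : ℕ) (p : ℝ) (k : ℕ) : ℝ :=
  (n.choose k : ℝ) * p ^ k * (1 - p) ^ (n - k)

section Binomial

variable {m : ℕ} {p : ℝ}

lemma binomProb_nonneg (hp0 : 0 ≤ p) (hp1 : p ≤ 1) (k : ℕ) : 0 ≤ binomProb m p k := by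
  have : 0 ≤ 1 - p := by linarith
  unfold binomProb
  positivity

lemma binomProb_eq_zero_of_lt {k : ℕ} (h : m < k) : binomProb m p k = 0 := by
  simp [binomProb, Nat.choose_eq_zero_of_lt h]

lemma sum_range_binomProb : ∑ k ∈ range (m + 1), binomProb m p k = 1 := by
  rw [← (one_pow m : (1 : ℝ) ^ m = 1), ← add_sub_cancel p 1, add_pow]
  exact sum_congr rfl fun k _ ↦ by rw [binomProb]; ring

lemma sum_binomProb_le_one (hp0 : 0 ≤ p) (hp1 : p ≤ 1) (s : Finset ℕ) :
    ∑ k ∈ s, binomProb m p k ≤ 1 := by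
  calc ∑ k ∈ s, binomProb m p k = ∑ k ∈ s with k ≤ m, binomProb m p k :=
        (sum_filter_of_ne fun k _ hk ↦ not_lt.1 fun h ↦ hk (binomProb_eq_zero_of_lt h)).symm
    _ ≤ ∑ k ∈ range (m + 1), binomProb m p k :=
        sum_le_sum_of_subset_of_nonneg
          (fun k hk ↦ by simp only [mem_filter, mem_range] at hk ⊢; omega)
          fun k _ _ ↦ binomProb_nonneg hp0 hp1 k
    _ = 1 := sum_range_binomProb

lemma binomProb_le_one (hp0 : 0 ≤ p) (hp1 : p ≤ 1) (k : ℕ) : binomProb m p k ≤ 1 := by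
  simpa using sum_binomProb_le_one (m := m) hp0 hp1 {k}

lemma binomProb_one_sub {k : ℕ} (h : k ≤ m) : binomProb m (1 - p) k = binomProb m p (m - k) := by
  rw [binomProb, binomProb, ← Nat.choose_symm h, Nat.sub_sub_self h, sub_sub_cancel]
  ring

lemma binomProb_succ_mul (k : ℕ) :
    binomProb m p (k + 1) * ((k + 1) * (1 - p)) = binomProb m p k * ((m - k : ℕ) * p) := by
  rcases lt_or_ge k m with hk | hk
  · have hchoose : (m.choose (k + 1) * (k + 1) : ℝ) = m.choose k * (m - k : ℕ) := by
      exact_mod_cast Nat.choose_succ_right_eq m k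
    have hpow : (1 - p) ^ (m - k) = (1 - p) ^ (m - (k + 1)) * (1 - p) := by
      rw [← pow_succ]; congr 1; omega
    rw [binomProb, binomProb, hpow]
    linear_combination hchoose * (p ^ k * p * (1 - p) ^ (m - (k + 1)) * (1 - p))
  · simp [binomProb_eq_zero_of_lt (Nat.lt_succ_of_le hk), Nat.sub_eq_zero_of_le hk]

lemma binomProb_le_succ (hp0 : 0 ≤ p) (hp1 : p < 1) {k : ℕ} (hk : (k : ℝ) + 1 ≤ (m + 1) * p) :
    binomProb m p k ≤ binomProb m p (k + 1) := by
  have hkm : k < m := by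
    have : (k : ℝ) < m := by nlinarith
    exact_mod_cast this
  have hratio : ((k : ℝ) + 1) * (1 - p) ≤ (m - k : ℕ) * p := by
    rw [Nat.cast_sub hkm.le]; linarith
  have hpos : 0 < ((k : ℝ) + 1) * (1 - p) := mul_pos (by positivity) (by linarith)
  refine le_of_mul_le_mul_right ?_ hpos
  rw [binomProb_succ_mul]
  exact mul_le_mul_of_nonneg_left hratio (binomProb_nonneg hp0 hp1.le k)

lemma binomProb_succ_le (hp0 : 0 ≤ p) (hp1 : p < 1) {k : ℕ} (hk : (m + 1) * p ≤ (k : ℝ) + 1) :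
    binomProb m p (k + 1) ≤ binomProb m p k := by
  have hratio : ((m - k : ℕ) : ℝ) * p ≤ ((k : ℝ) + 1) * (1 - p) := by
    rcases le_total k m with hkm | hkm
    · rw [Nat.cast_sub hkm]; linarith
    · rw [Nat.sub_eq_zero_of_le hkm, Nat.cast_zero, zero_mul]
      have : 0 ≤ 1 - p := by linarith
      positivity
  have hpos : 0 < ((k : ℝ) + 1) * (1 - p) := mul_pos (by positivity) (by linarith)
  refine le_of_mul_le_mul_right ?_ hpos
  rw [binomProb_succ_mul]
  exact mul_le_mul_of_nonneg_left hratio (binomProb_nonneg hp0 hp1.le k)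

lemma binomProb_le_binomProb_floor (hp0 : 0 ≤ p) (hp1 : p < 1) (k : ℕ) :
    binomProb m p k ≤ binomProb m p ⌊(m + 1) * p⌋₊ := by
  set k₀ := ⌊(m + 1) * p⌋₊
  rcases le_total k k₀ with hk | hk
  · refine monotoneOn_of_le_succ Set.ordConnected_Iic (fun j _ _ hj ↦ ?_) hk le_rfl hk
    apply binomProb_le_succ hp0 hp1
    have : (j : ℝ) + 1 ≤ k₀ := by exact_mod_cast hj
    exact this.trans (Nat.floor_le (by positivity))
  · refine Nat.rel_of_forall_rel_succ_of_le_of_le (· ≥ ·) (fun j hj ↦ ?_) le_rfl hk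
    apply binomProb_succ_le hp0 hp1
    have : (k₀ : ℝ) ≤ j := by exact_mod_cast hj
    linarith [Nat.lt_floor_add_one ((m + 1) * p)]

end Binomial

lemma factorial_le_stirling {n : ℕ} (hn : n ≠ 0) :
    (n ! : ℝ) ≤ exp 1 * √n * (n / exp 1) ^ n := by
  obtain ⟨j, rfl⟩ := Nat.exists_eq_succ_of_ne_zero hn
  have h : Stirling.stirlingSeq (j + 1) ≤ exp 1 / √2 := by
    simpa using Stirling.stirlingSeq'_antitone (Nat.zero_le j)
  rw [Stirling.stirlingSeq, div_le_iff₀ (by positivity), sqrt_mul zero_le_two] at h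
  calc ((j + 1)! : ℝ) ≤ _ := h
    _ = _ := by field_simp

lemma pow_le_pow_mul_exp_sub {x : ℝ} (hx : 0 ≤ x) (j : ℕ) :
    x ^ j ≤ (j : ℝ) ^ j * exp (x - j) := by
  rcases Nat.eq_zero_or_pos j with rfl | hj
  · simpa using one_le_exp hx
  have hj : (0 : ℝ) < j := by exact_mod_cast hj
  calc x ^ j = (j : ℝ) ^ j * (x / j) ^ j := by rw [← mul_pow, mul_div_cancel₀ _ hj.ne']
    _ ≤ (j : ℝ) ^ j * exp (x / j - 1) ^ j := by
        gcongr; linarith [add_one_le_exp (x / j - 1)]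
    _ = (j : ℝ) ^ j * exp (x - j) := by
        rw [← exp_nat_mul]; congr 2; field_simp

lemma pow_mul_pow_le {x y : ℝ} (hx : 0 ≤ x) (hy : 0 ≤ y) {k l : ℕ} (h : x + y = k + l) :
    x ^ k * y ^ l ≤ (k : ℝ) ^ k * (l : ℝ) ^ l := by
  calc x ^ k * y ^ l ≤ ((k : ℝ) ^ k * exp (x - k)) * ((l : ℝ) ^ l * exp (y - l)) :=
        mul_le_mul (pow_le_pow_mul_exp_sub hx k) (pow_le_pow_mul_exp_sub hy l) (by positivity)
          (by positivity)
    _ = (k : ℝ) ^ k * (l : ℝ) ^ l := by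
        rw [mul_mul_mul_comm, ← exp_add, show x - k + (y - l) = 0 by linarith, exp_zero, mul_one]

lemma binomProb_add_le {p : ℝ} (hp0 : 0 ≤ p) (hp1 : p ≤ 1) {k l : ℕ} (hk : k ≠ 0) (hl : l ≠ 0) :
    binomProb (k + l) p k ≤ exp 1 * √(k + l) / (2 * π * √(k * l)) := by
  set m := k + l
  have hm : m ≠ 0 := by omega
  have hchoose : (m.choose k : ℝ) = m ! / (k ! * l !) := by
    have h := Nat.choose_mul_factorial_mul_factorial (Nat.le_add_right k l)
    rw [Nat.add_sub_cancel_left] at h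
    rw [eq_div_iff (by positivity), ← mul_assoc]
    exact_mod_cast h
  have hent : ((m : ℝ) * p) ^ k * (m * (1 - p)) ^ l ≤ (k : ℝ) ^ k * (l : ℝ) ^ l :=
    pow_mul_pow_le (by positivity) (mul_nonneg (by positivity) (by linarith))
      (by simp only [m]; push_cast; ring)
  calc binomProb m p k = m ! * (p ^ k * (1 - p) ^ l) / (k ! * l !) := by
        rw [binomProb, hchoose, show m - k = l by omega]; ring
    _ ≤ exp 1 * √m * (m / exp 1) ^ m * (p ^ k * (1 - p) ^ l) /
          ((√(2 * π * k) * (k / exp 1) ^ k) * (√(2 * π * l) * (l / exp 1) ^ l)) := by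
        gcongr
        exacts [factorial_le_stirling hm, Stirling.le_factorial_stirling k,
          Stirling.le_factorial_stirling l]
    _ = exp 1 * √m / (2 * π * √(k * l)) *
          ((m * p) ^ k * (m * (1 - p)) ^ l / ((k : ℝ) ^ k * (l : ℝ) ^ l)) := by
        have hsqrt : √(2 * π * k) * √(2 * π * l) = 2 * π * √(k * l) := by
          rw [← sqrt_mul (by positivity),
            show 2 * π * k * (2 * π * l) = (2 * π) ^ 2 * (k * l) by ring,
            sqrt_mul (by positivity), sqrt_sq (by positivity)]
        rw [← hsqrt]
        simp only [m, pow_add, mul_pow, div_pow, Nat.cast_add]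
        field_simp
    _ ≤ exp 1 * √m / (2 * π * √(k * l)) := by
        apply mul_le_of_le_one_right (by positivity)
        exact div_le_one_of_le₀ hent (by positivity)
    _ = exp 1 * √(k + l) / (2 * π * √(k * l)) := by simp [m]

lemma sq_le_add_one_mul_sqrt {b P : ℝ} (hb : 0 ≤ b) (h1 : 1 ≤ P) (h2 : b ^ 2 - b ≤ P) :
    b ^ 2 ≤ (b + 1) * √P := by
  have hquartic : (b ^ 2) ^ 2 ≤ (b + 1) ^ 2 * P := by
    rcases le_total (b ^ 2) (b + 1) with hsmall | hlarge
    · nlinarith [pow_le_pow_left₀ (by positivity) hsmall 2]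
    · nlinarith [mul_le_mul_of_nonneg_left h2 (sq_nonneg (b + 1))]
  calc b ^ 2 = √((b ^ 2) ^ 2) := (sqrt_sq (by positivity)).symm
    _ ≤ √((b + 1) ^ 2 * P) := sqrt_le_sqrt hquartic
    _ = (b + 1) * √P := by rw [sqrt_mul (by positivity), sqrt_sq (by positivity)]

lemma binomProb_le_of_le_half {m : ℕ} (hm : m ≠ 0) {ζ : ℝ} (hζ0 : 0 < ζ) (hζ : ζ ≤ 1 / 2)
    (k : ℕ) : binomProb m ζ k ≤ exp 1 / (2 * π) * (1 + 1 / (ζ * m)) / (ζ * √m) := by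
  set b := ζ * m
  have hmR : (0 : ℝ) < m := by positivity
  have hb0 : 0 < b := by positivity
  have hζm : 0 < ζ * √m := by positivity
  have hsqrt_m : √m * (ζ * √m) = b := by rw [mul_left_comm, mul_self_sqrt hmR.le]
  rcases lt_or_ge b 1 with hb1 | hb1
  · have hc : 3 / 4 ≤ exp 1 / (2 * π) * (1 + 1 / b) := by
      have h2 : 1 < 1 / b := (one_lt_div hb0).2 hb1
      have he : 2.7 < exp 1 := lt_trans (by norm_num) exp_one_gt_d9
      rw [div_mul_eq_mul_div, le_div_iff₀ (by positivity)]
      nlinarith [pi_lt_d2]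
    have hsmall : ζ * √m ≤ 3 / 4 := by nlinarith
    calc binomProb m ζ k ≤ 1 := binomProb_le_one hζ0.le (by linarith) k
      _ ≤ exp 1 / (2 * π) * (1 + 1 / b) / (ζ * √m) := (one_le_div hζm).2 (hsmall.trans hc)
  set k₀ := ⌊(m + 1) * ζ⌋₊
  have hk₀_lower : b + ζ - 1 ≤ k₀ := by linarith [Nat.lt_floor_add_one ((m + 1) * ζ)]
  have hk₀_upper : (k₀ : ℝ) ≤ (m + 1) * ζ := Nat.floor_le (by positivity)
  have hk₀ : k₀ ≠ 0 := by
    rw [← Nat.one_le_iff_ne_zero, Nat.one_le_floor_iff]; linarith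
  have hk₀m : k₀ < m := by
    have : (k₀ : ℝ) < m := by nlinarith
    exact_mod_cast this
  obtain ⟨l, hl⟩ : ∃ l, m = k₀ + l := ⟨m - k₀, by omega⟩
  have hl0 : l ≠ 0 := by omega
  have hmkl : (m : ℝ) = k₀ + l := by exact_mod_cast hl
  have hl_lower : b - ζ ≤ l := by nlinarith
  have hP : b ^ 2 ≤ (b + 1) * √(k₀ * l) := by
    apply sq_le_add_one_mul_sqrt hb0.le
    · exact one_le_mul_of_one_le_of_one_le (by exact_mod_cast Nat.one_le_iff_ne_zero.2 hk₀)
        (by exact_mod_cast Nat.one_le_iff_ne_zero.2 hl0)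
    · nlinarith [mul_le_mul hk₀_lower hl_lower (by linarith) (by positivity)]
  have hPpos : 0 < √(k₀ * l) := by positivity
  calc binomProb m ζ k ≤ binomProb m ζ k₀ := binomProb_le_binomProb_floor hζ0.le (by linarith) k
    _ ≤ exp 1 * √m / (2 * π * √(k₀ * l)) := by
        rw [hmkl, hl]; exact binomProb_add_le hζ0.le (by linarith) hk₀ hl0
    _ = exp 1 / (2 * π) * (√m / √(k₀ * l)) := by ring
    _ ≤ exp 1 / (2 * π) * ((1 + 1 / b) / (ζ * √m)) := by
        refine mul_le_mul_of_nonneg_left ?_ (by positivity)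
        rw [div_le_div_iff₀ hPpos hζm, hsqrt_m, add_div' _ _ _ hb0.ne', div_mul_eq_mul_div,
          le_div_iff₀ hb0]
        nlinarith
    _ = exp 1 / (2 * π) * (1 + 1 / b) / (ζ * √m) := by ring

lemma binomProb_le_of_le_two_mul {n m : ℕ} (hn : n ≠ 0) (hnm : n ≤ 2 * m) {ζ : ℝ} (hζ0 : 0 < ζ)
    (hζ : ζ ≤ 1 / 2) (k : ℕ) :
    binomProb m ζ k ≤ exp 1 * √2 / (2 * π) * (1 + 2 / (ζ * n)) / (ζ * √n) := by
  have hm : m ≠ 0 := by omega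
  have hnR : (0 : ℝ) < n := by positivity
  have hnmR : (n : ℝ) ≤ 2 * m := by exact_mod_cast hnm
  have hrate : 1 / (ζ * m) ≤ 2 / (ζ * n) := by
    rw [div_le_div_iff₀ (by positivity) (by positivity)]; nlinarith
  have hsqrt : √n ≤ √2 * √m := by rw [← sqrt_mul zero_le_two]; exact sqrt_le_sqrt hnmR
  calc binomProb m ζ k ≤ exp 1 / (2 * π) * (1 + 1 / (ζ * m)) / (ζ * √m) :=
        binomProb_le_of_le_half hm hζ0 hζ k
    _ = exp 1 / (2 * π) * (1 + 1 / (ζ * m)) / ζ * (1 / √m) := by ring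
    _ ≤ exp 1 / (2 * π) * (1 + 2 / (ζ * n)) / ζ * (√2 / √n) := by
        gcongr _ * (1 + ?_) / ζ * ?_
        rw [div_le_div_iff₀ (by positivity) (by positivity)]
        linarith
    _ = exp 1 * √2 / (2 * π) * (1 + 2 / (ζ * n)) / (ζ * √n) := by ring

lemma binomProb_one_sub_le {m : ℕ} {p T : ℝ} (h : ∀ k, binomProb m p k ≤ T) (hT : 0 ≤ T) (k : ℕ) :
    binomProb m (1 - p) k ≤ T := by
  rcases le_or_gt k m with hk | hk
  · rw [binomProb_one_sub hk]; exact h _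
  · rw [binomProb_eq_zero_of_lt hk]; exact hT

lemma sum_ite_binomProb_sub_le_one {m : ℕ} {p : ℝ} (hp0 : 0 ≤ p) (hp1 : p ≤ 1) (N i : ℕ) :
    ∑ x ∈ range N, (if x ≤ i then binomProb m p (i - x) else 0) ≤ 1 := by
  rw [← sum_filter]
  calc ∑ x ∈ range N with x ≤ i, binomProb m p (i - x)
      ≤ ∑ x ∈ range (i + 1), binomProb m p (i - x) :=
        sum_le_sum_of_subset_of_nonneg
          (fun x hx ↦ by simp only [mem_filter, mem_range] at hx ⊢; omega)
          fun x _ _ ↦ binomProb_nonneg hp0 hp1 _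
    _ = ∑ j ∈ range (i + 1), binomProb m p j := sum_range_reflect (binomProb m p ·) (i + 1)
    _ ≤ 1 := sum_binomProb_le_one hp0 hp1 _

lemma sum_mul_le_of_sum_le_one {ι : Type*} {s : Finset ι} {f g : ι → ℝ} {T : ℝ}
    (hf : ∀ i ∈ s, 0 ≤ f i) (hf1 : ∑ i ∈ s, f i ≤ 1) (hg : ∀ i ∈ s, g i ≤ T) (hT : 0 ≤ T) :
    ∑ i ∈ s, f i * g i ≤ T :=
  calc ∑ i ∈ s, f i * g i ≤ ∑ i ∈ s, f i * T :=
        sum_le_sum fun i hi ↦ mul_le_mul_of_nonneg_left (hg i hi) (hf i hi)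
    _ = (∑ i ∈ s, f i) * T := (sum_mul ..).symm
    _ ≤ T := mul_le_of_le_one_left hT hf1

theorem stmt7 (n nX nY : ℕ) (hn : 1 ≤ n) (hsum : nX + nY = n)
    (ζ : ℝ) (hζ0 : 0 < ζ) (hζ : ζ ≤ 1 / 2) (i : ℕ) :
    ∑ x ∈ Finset.range (nX + 1),
        binomProb nX ζ x *
          (if x ≤ i then binomProb nY (1 - ζ) (i - x) else 0) ≤
      (Real.exp 1 * Real.sqrt 2 / (2 * Real.pi)) * (1 + 2 / (ζ * n)) /
        (ζ * Real.sqrt n) := by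
  set T := exp 1 * √2 / (2 * π) * (1 + 2 / (ζ * n)) / (ζ * √n)
  have hT : 0 ≤ T := by positivity
  have hζ1 : ζ ≤ 1 := by linarith
  have hbound : ∀ m, n ≤ 2 * m → ∀ k, binomProb m ζ k ≤ T := fun m hm ↦
    binomProb_le_of_le_two_mul (by omega) hm hζ0 hζ
  rcases le_total nX nY with hY | hX
  · refine sum_mul_le_of_sum_le_one (fun x _ ↦ binomProb_nonneg hζ0.le hζ1 x)
      sum_range_binomProb.le (fun x _ ↦ ?_) hT
    split_ifs
    exacts [binomProb_one_sub_le (hbound nY (by omega)) hT _, hT]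
  · have hite_nonneg (x : ℕ) : 0 ≤ if x ≤ i then binomProb nY (1 - ζ) (i - x) else 0 := by
      split_ifs
      exacts [binomProb_nonneg (by linarith) (by linarith) _, le_rfl]
    simp_rw [mul_comm (binomProb nX ζ _)]
    exact sum_mul_le_of_sum_le_one (fun x _ ↦ hite_nonneg x)
      (sum_ite_binomProb_sub_le_one (by linarith) (by linarith) _ i)
      (fun x _ ↦ hbound nX (by omega) x) hT
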